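/- Let ω ∈ ℝ with ω ≠ 0 and σ : ℤ → ℝ with σ_j = 0 for j < 0. Define infinite matrices C, M : ℕ × ℕ → ℂ by C_{j,j} = −iω + σ_{j−1}/2, C_{j,j+1} = σ_j/2, and C_{j,k} = 0 otherwise; and M_{j,k} = (2(−1)^{j+k}/(−2iω + σ_{j−1})) Π_{l=j}^{k−1} (σ_l/(−2iω + σ_l)) for k ≥ j (empty product equal to 1 for k = j) and M_{j,k} = 0 for k < j (all the denominators −2iω + σ_l are nonzero since ω ≠ 0 is real and σ_l is real). Then M is a two-sided inverse of C: for all j, m ∈ ℕ, Σ_k C_{j,k} M_{k,m} = δ_{j,m} and Σ_k M_{j,k} C_{k,m} = δ_{j,m}, where both sums have finitely many nonzero terms and δ is the Kronecker delta. -/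

import Mathlib

/-- The upper-bidiagonal operator `C₂`: `C_{j,j} = −iω + σ_{j−1}/2`,
`C_{j,j+1} = σ_j/2`, all other entries zero. Here `σ : ℤ → ℝ` with `σ_j = 0` for `j < 0`. -/
noncomputable def Cmat2 (ω : ℝ) (σ : ℤ → ℝ) (j k : ℕ) : ℂ :=
  if k = j then -(Complex.I * (ω : ℂ)) + (σ ((j : ℤ) - 1) : ℂ) / 2
  else if k = j + 1 then (σ (j : ℤ) : ℂ) / 2
  else 0

/-- The upper-triangular operator `M₂` with entries
`M_{j,k} = (2(−1)^{j+k}/(−2iω + σ_{j−1})) Π_{l=j}^{k−1} (σ_l/(−2iω + σ_l))` for `k ≥ j`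
(empty product equal to `1` for `k = j`), and `0` for `k < j`. -/
noncomputable def Mmat2 (ω : ℝ) (σ : ℤ → ℝ) (j k : ℕ) : ℂ :=
  if j ≤ k then
    (2 * (-1 : ℂ) ^ (j + k) / (-(2 * Complex.I * (ω : ℂ)) + (σ ((j : ℤ) - 1) : ℂ))) *
      ∏ l ∈ Finset.Ico j k,
        ((σ (l : ℤ) : ℂ) / (-(2 * Complex.I * (ω : ℂ)) + (σ (l : ℤ) : ℂ)))
  else 0

/-!
With `d_l = −2iω + σ_l`, the operator `C₂` is the upper-bidiagonal matrix with diagonal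
`a_j = d_{j−1}/2` and superdiagonal `b_j = σ_j/2`. An upper-bidiagonal matrix with invertible
diagonal has the upper-triangular two-sided inverse `N_{j,k} = a_j⁻¹ ∏_{l=j}^{k−1} (−b_l/a_{l+1})`,
because `a_j N_{j,m} = −b_j N_{j+1,m}` for `j < m` and `N_{j,m+1} = −N_{j,m} b_m/a_{m+1}` for `j ≤ m`;
and `M₂` is exactly this `N`.
-/

open Finset

namespace UpperBidiagonal

variable {K : Type*} [Field K] (a b : ℕ → K)

def mat (j k : ℕ) : K :=
  if k = j then a j else if k = j + 1 then b j else 0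

noncomputable def inv (j k : ℕ) : K :=
  if j ≤ k then (a j)⁻¹ * ∏ l ∈ Ico j k, -(b l / a (l + 1)) else 0

variable {a b}

lemma inv_of_lt {j k : ℕ} (h : k < j) : inv a b j k = 0 := if_neg (by omega)

lemma mul_inv_of_lt {j m : ℕ} (ha : ∀ j, a j ≠ 0) (h : j < m) :
    a j * inv a b j m = -(b j * inv a b (j + 1) m) := by
  rw [inv, inv, if_pos h.le, if_pos (Nat.succ_le_of_lt h), prod_eq_prod_Ico_succ_bot h]
  field_simp [ha j]

lemma inv_succ_right {j m : ℕ} (h : j ≤ m) :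
    inv a b j (m + 1) = -(inv a b j m * (b m / a (m + 1))) := by
  rw [inv, inv, if_pos h, if_pos (by omega), prod_Ico_succ_top h]
  ring

variable [TopologicalSpace K]

lemma tsum_mat_mul (f : ℕ → K) (j : ℕ) :
    ∑' k, mat a b j k * f k = a j * f j + b j * f (j + 1) := by
  rw [tsum_eq_sum (s := {j, j + 1}) fun k hk => by
    simp only [mem_insert, mem_singleton, not_or] at hk
    simp [mat, hk.1, hk.2]]
  simp [mat]

lemma tsum_mul_mat_zero (f : ℕ → K) : ∑' k, f k * mat a b k 0 = f 0 * a 0 := by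
  rw [tsum_eq_single 0 fun k hk => by simp [mat, hk, Ne.symm hk]]
  simp [mat]

lemma tsum_mul_mat_succ (f : ℕ → K) (m : ℕ) :
    ∑' k, f k * mat a b k (m + 1) = f m * b m + f (m + 1) * a (m + 1) := by
  rw [tsum_eq_sum (s := {m, m + 1}) fun k hk => by
    simp only [mem_insert, mem_singleton, not_or] at hk
    simp [mat, Ne.symm hk.1, Ne.symm hk.2]]
  simp [mat]

lemma tsum_mat_mul_inv (ha : ∀ j, a j ≠ 0) (j m : ℕ) :
    ∑' k, mat a b j k * inv a b k m = if j = m then 1 else 0 := by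
  rw [tsum_mat_mul]
  rcases lt_trichotomy j m with h | rfl | h
  · rw [mul_inv_of_lt ha h, if_neg h.ne, neg_add_cancel]
  · simp [inv, ha j]
  · rw [inv_of_lt h, inv_of_lt (by omega), if_neg h.ne']
    ring

lemma tsum_inv_mul_mat (ha : ∀ j, a j ≠ 0) (j m : ℕ) :
    ∑' k, inv a b j k * mat a b k m = if j = m then 1 else 0 := by
  cases m with
  | zero =>
    rw [tsum_mul_mat_zero]
    rcases Nat.eq_zero_or_pos j with rfl | h
    · simp [inv, ha 0]
    · rw [inv_of_lt h, if_neg h.ne', zero_mul]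
  | succ m =>
    rw [tsum_mul_mat_succ]
    rcases lt_trichotomy j (m + 1) with h | rfl | h
    · rw [inv_succ_right (by omega), if_neg h.ne]
      field_simp [ha (m + 1)]
      ring
    · simp [inv, ha (m + 1)]
    · rw [inv_of_lt h, inv_of_lt (by omega), if_neg h.ne']
      ring

end UpperBidiagonal

lemma neg_two_I_mul_add_ofReal_ne_zero {ω : ℝ} (hω : ω ≠ 0) (x : ℝ) :
    -(2 * Complex.I * ω) + x ≠ 0 := by
  intro h
  simpa [hω] using congrArg Complex.im h

lemma Cmat2_eq_mat (ω : ℝ) (σ : ℤ → ℝ) :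
    Cmat2 ω σ = UpperBidiagonal.mat
      (fun j => (-(2 * Complex.I * ω) + σ ((j : ℤ) - 1)) / 2) (fun j => σ j / 2) := by
  ext j k
  simp only [Cmat2, UpperBidiagonal.mat]
  split_ifs <;> ring

lemma Mmat2_eq_inv {ω : ℝ} (hω : ω ≠ 0) (σ : ℤ → ℝ) :
    Mmat2 ω σ = UpperBidiagonal.inv
      (fun j => (-(2 * Complex.I * ω) + σ ((j : ℤ) - 1)) / 2) (fun j => σ j / 2) := by
  ext j k
  simp only [Mmat2, UpperBidiagonal.inv]
  split_ifs with h
  · have hsign : (-1 : ℂ) ^ (j + k) = (-1) ^ #(Ico j k) := by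
      rw [Nat.card_Ico, show j + k = (k - j) + 2 * j by omega, pow_add, pow_mul]
      simp
    have hd := neg_two_I_mul_add_ofReal_ne_zero hω
    simp only [prod_neg, Nat.cast_add, Nat.cast_one, add_sub_cancel_right, hsign]
    field_simp [hd]
  · rfl

theorem stmt17_general (ω : ℝ) (hω : ω ≠ 0) (σ : ℤ → ℝ) :
    (∀ j m : ℕ, ∑' k : ℕ, Cmat2 ω σ j k * Mmat2 ω σ k m =
      if j = m then 1 else 0) ∧
    (∀ j m : ℕ, ∑' k : ℕ, Mmat2 ω σ j k * Cmat2 ω σ k m =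
      if j = m then 1 else 0) := by
  have ha (j : ℕ) : (-(2 * Complex.I * ω) + σ ((j : ℤ) - 1)) / 2 ≠ 0 :=
    div_ne_zero (neg_two_I_mul_add_ofReal_ne_zero hω _) two_ne_zero
  rw [Cmat2_eq_mat, Mmat2_eq_inv hω]
  exact ⟨UpperBidiagonal.tsum_mat_mul_inv ha, UpperBidiagonal.tsum_inv_mul_mat ha⟩

/-- `M₂` is a two-sided inverse of `C₂`. The sums over `k` have finitely
many nonzero terms, so they are expressed as `tsum`s. -/
theorem stmt17 (ω : ℝ) (hω : ω ≠ 0) (σ : ℤ → ℝ) (hσneg : ∀ j : ℤ, j < 0 → σ j = 0) :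
    (∀ j m : ℕ, ∑' k : ℕ, Cmat2 ω σ j k * Mmat2 ω σ k m =
      if j = m then 1 else 0) ∧
    (∀ j m : ℕ, ∑' k : ℕ, Mmat2 ω σ j k * Cmat2 ω σ k m =
      if j = m then 1 else 0) :=
  stmt17_general ω hω σ
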